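/- Let G be a second countable locally compact Hausdorff principal groupoid with left Haar system. If G is integrable then all orbits of G are locally closed. -/

import Mathlib

open MeasureTheory Filter Topology ENNReal Classical

/-- A topological groupoid, given by range/source maps, a (total) partial-multiplication
`mul` (only meaningful on composable pairs, i.e. when `s γ = r α`) and inversion. -/
structure TopGroupoid (G : Type*) [TopologicalSpace G] where
  r : G → G
  s : G → G
  mul : G → G → G
  inv : G → G
  r_mul : ∀ γ α, s γ = r α → r (mul γ α) = r γ
  s_mul : ∀ γ α, s γ = r α → s (mul γ α) = s α
  mul_assoc' : ∀ γ α β, s γ = r α → s α = r β → mul (mul γ α) β = mul γ (mul α β)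
  r_inv : ∀ γ, r (inv γ) = s γ
  s_inv : ∀ γ, s (inv γ) = r γ
  inv_inv' : ∀ γ, inv (inv γ) = γ
  mul_inv' : ∀ γ, mul γ (inv γ) = r γ
  inv_mul' : ∀ γ, mul (inv γ) γ = s γ
  unit_mul : ∀ γ, mul (r γ) γ = γ
  mul_unit : ∀ γ, mul γ (s γ) = γ
  continuous_r : Continuous r
  continuous_s : Continuous s
  continuous_inv : Continuous inv
  continuous_mul : ContinuousOn (fun p : G × G => mul p.1 p.2) {p | s p.1 = r p.2}

namespace TopGroupoid

variable {G : Type*} [TopologicalSpace G] (Gd : TopGroupoid G)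

/-- The unit space `G⁰` of the groupoid. -/
def units : Set G := Set.range Gd.r

/-- The orbit `[z] = r(s⁻¹{z})` of a unit `z`. -/
def orbit (z : G) : Set G := Gd.r '' (Gd.s ⁻¹' {z})

/-- A groupoid is principal if `γ ↦ (r γ, s γ)` is injective. -/
def Principal : Prop := Function.Injective (fun γ => (Gd.r γ, Gd.s γ))

/-- Product of two subsets of the groupoid: all products of composable pairs. -/
def setMul (A B : Set G) : Set G :=
  {x | ∃ γ ∈ A, ∃ α ∈ B, Gd.s γ = Gd.r α ∧ x = Gd.mul γ α}

/-- Powers of a subset with respect to `setMul`; `A ^ 1 = A`. -/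
def setPow (A : Set G) : ℕ → Set G
  | 0 => Gd.units
  | n+1 => Gd.setMul A (setPow A n)

/-- A set `W ⊆ G` is conditionally compact if `WV` and `VW` are relatively compact
for every compact `V ⊆ G`. -/
def CondCompact (W : Set G) : Prop :=
  ∀ V : Set G, IsCompact V →
    IsCompact (closure (Gd.setMul W V)) ∧ IsCompact (closure (Gd.setMul V W))

/-- A sequence `x : ℕ → G` (in the unit space) converges `k`-times in `G⁰/G` to `z`. -/
def ConvergesKTimes (x : ℕ → G) (z : G) (k : ℕ) : Prop :=
  ∃ γ : Fin k → ℕ → G,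
    (∀ i n, Gd.s (γ i n) = x n) ∧
    (∀ i, Tendsto (fun n => Gd.r (γ i n)) atTop (𝓝 z)) ∧
    (∀ i j : Fin k, i < j →
      Tendsto (fun n => Gd.mul (γ j n) (Gd.inv (γ i n))) atTop (cocompact G))

end TopGroupoid

/-- A left Haar system on a topological groupoid: a family of Radon measures `λˣ`
with support `r⁻¹{x}`, continuous in `x`, and left invariant. -/
structure HaarSystem {G : Type*} [TopologicalSpace G] [MeasurableSpace G]
    (Gd : TopGroupoid G) where
  lam : G → Measure G
  regular : ∀ x, (lam x).Regular
  supp_subset : ∀ x ∈ Gd.units, lam x {γ | Gd.r γ ≠ x} = 0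
  supp_full : ∀ x ∈ Gd.units, ∀ U : Set G, IsOpen U →
      (U ∩ Gd.r ⁻¹' {x}).Nonempty → 0 < lam x U
  continuous_int : ∀ f : G → ℝ, Continuous f → HasCompactSupport f →
      Continuous fun x => ∫ γ, f γ ∂(lam x)
  left_invariant : ∀ γ : G, ∀ f : G → ℝ, Continuous f → HasCompactSupport f →
      ∫ α, f (Gd.mul γ α) ∂(lam (Gd.s γ)) = ∫ α, f α ∂(lam (Gd.r γ))

namespace HaarSystem

variable {G : Type*} [TopologicalSpace G] [MeasurableSpace G]
  {Gd : TopGroupoid G} (HS : HaarSystem Gd)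

/-- The associated right Haar system `λ_x(E) = λˣ(E⁻¹)`, supported on `s⁻¹{x}`. -/
noncomputable def rlam (x : G) : Measure G := (HS.lam x).map Gd.inv

/-- The groupoid (with its Haar system) is integrable if
`sup_{x ∈ N} λˣ(s⁻¹ N) < ∞` for every compact `N ⊆ G⁰`. -/
def Integrable : Prop :=
  ∀ N : Set G, N ⊆ Gd.units → IsCompact N →
    (⨆ x ∈ N, HS.lam x (Gd.s ⁻¹' N)) < ⊤

/-- `G` fails to be integrable at `z` if `sup_{x ∈ U} λˣ(s⁻¹ U) = ∞` for every open
neighborhood `U` of `z` in `G⁰`. -/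
def FailsIntegrableAt (z : G) : Prop :=
  ∀ U : Set G, IsOpen U → z ∈ U →
    (⨆ x ∈ U ∩ Gd.units, HS.lam x (Gd.s ⁻¹' (U ∩ Gd.units))) = ⊤

end HaarSystem


/-!
Suppose `x₀ ∈ [z]` is a limit of points `y ∈ closure [z] \ [z]`. Fix a compact neighbourhood `K`
of `x₀` and a bump `f` near `x₀` supported in `s⁻¹(K)`, so that `x ↦ ∫ f dλˣ` exceeds some
`c > 0` near `x₀`. The points joined to a given point of `[z]` by an arrow of the compact set
`S S⁻¹` (with `S = tsupport f`) form a closed subset of `[z]`, which misses `y`; hence arbitrarily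
many points `p₁, …, pₙ ∈ [z]` near `y` can be chosen with no arrow of `S S⁻¹` between any two of
them. Translating `f` along arrows from a fixed `x = p₁` to the `pᵢ` gives `n` disjoint sets of
`λˣ`-mass at least `c` inside `s⁻¹(K ∩ G⁰)`, so integrability fails on `K ∩ G⁰`. Thus `[z]` is
open in its closure.
-/

namespace TopGroupoid

variable {G : Type*} [TopologicalSpace G] {Gd : TopGroupoid G}

lemma r_eq_self_of_mem_units {x : G} (hx : x ∈ Gd.units) : Gd.r x = x := by
  obtain ⟨w, rfl⟩ := hx
  conv_lhs => rw [← Gd.mul_inv' w]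
  exact Gd.r_mul w (Gd.inv w) (Gd.r_inv w).symm

lemma s_eq_self_of_mem_units {x : G} (hx : x ∈ Gd.units) : Gd.s x = x := by
  obtain ⟨w, rfl⟩ := hx
  conv_lhs => rw [← Gd.mul_inv' w]
  rw [Gd.s_mul w (Gd.inv w) (Gd.r_inv w).symm, Gd.s_inv]

lemma r_mem_units (γ : G) : Gd.r γ ∈ Gd.units := ⟨γ, rfl⟩

lemma s_mem_units (γ : G) : Gd.s γ ∈ Gd.units := ⟨Gd.inv γ, Gd.r_inv γ⟩

lemma isClosed_units [T2Space G] : IsClosed Gd.units := by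
  have : Gd.units = {x | Gd.r x = x} :=
    Set.ext fun x => ⟨r_eq_self_of_mem_units, fun h => ⟨x, h⟩⟩
  exact this ▸ isClosed_eq Gd.continuous_r continuous_id

lemma orbit_subset_units (z : G) : Gd.orbit z ⊆ Gd.units := by
  rintro _ ⟨γ, -, rfl⟩
  exact r_mem_units γ

lemma r_mem_orbit_of_s_mem_orbit {z γ : G} (h : Gd.s γ ∈ Gd.orbit z) :
    Gd.r γ ∈ Gd.orbit z := by
  obtain ⟨b, hb, hbr⟩ := h
  refine ⟨Gd.mul γ b, ?_, Gd.r_mul γ b hbr.symm⟩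
  show Gd.s (Gd.mul γ b) = z
  rw [Gd.s_mul γ b hbr.symm]
  exact hb

lemma s_mem_orbit_of_r_mem_orbit {z γ : G} (h : Gd.r γ ∈ Gd.orbit z) :
    Gd.s γ ∈ Gd.orbit z := by
  rw [← Gd.r_inv]
  exact r_mem_orbit_of_s_mem_orbit (by rwa [Gd.s_inv])

lemma exists_arrow_of_mem_orbit {z p q : G} (hp : p ∈ Gd.orbit z) (hq : q ∈ Gd.orbit z) :
    ∃ γ, Gd.r γ = p ∧ Gd.s γ = q := by
  obtain ⟨a, ha, rfl⟩ := hp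
  obtain ⟨b, hb, rfl⟩ := hq
  have hab : Gd.s a = Gd.r (Gd.inv b) := by rw [Gd.r_inv]; exact ha.trans hb.symm
  exact ⟨Gd.mul a (Gd.inv b), Gd.r_mul _ _ hab, by rw [Gd.s_mul _ _ hab, Gd.s_inv]⟩

lemma isCompact_setMul [T2Space G] {A B : Set G} (hA : IsCompact A) (hB : IsCompact B) :
    IsCompact (Gd.setMul A B) := by
  set D := A ×ˢ B ∩ {p : G × G | Gd.s p.1 = Gd.r p.2}
  have hD : IsCompact D := (hA.prod hB).inter_right <|
    isClosed_eq (Gd.continuous_s.comp continuous_fst) (Gd.continuous_r.comp continuous_snd)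
  have : Gd.setMul A B = (fun p : G × G => Gd.mul p.1 p.2) '' D := by
    ext x
    constructor
    · rintro ⟨γ, hγ, α, hα, hc, rfl⟩
      exact ⟨(γ, α), ⟨⟨hγ, hα⟩, hc⟩, rfl⟩
    · rintro ⟨⟨γ, α⟩, ⟨⟨hγ, hα⟩, hc⟩, rfl⟩
      exact ⟨γ, hγ, α, hα, hc, rfl⟩
  rw [this]
  exact hD.image_of_continuousOn (Gd.continuous_mul.mono Set.inter_subset_right)

lemma isClosed_setOf_mul_mem [T2Space G] (β : G) {C : Set G} (hC : IsClosed C) :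
    IsClosed {α | Gd.r α = Gd.s β ∧ Gd.mul β α ∈ C} := by
  have hcont : ContinuousOn (Gd.mul β) (Gd.r ⁻¹' {Gd.s β}) :=
    Gd.continuous_mul.comp (continuous_const.prodMk continuous_id).continuousOn
      fun α (hα : Gd.r α = Gd.s β) => hα.symm
  exact hcont.preimage_isClosed_of_isClosed (isClosed_singleton.preimage Gd.continuous_r) hC

variable (Gd) in
def HasArrowIn (L : Set G) (p q : G) : Prop := ∃ γ ∈ L, Gd.r γ = p ∧ Gd.s γ = q

lemma isClosed_setOf_hasArrowIn_right [T2Space G] {L : Set G} (hL : IsCompact L) (p : G) :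
    IsClosed {q | Gd.HasArrowIn L p q} := by
  have : {q | Gd.HasArrowIn L p q} = Gd.s '' (L ∩ Gd.r ⁻¹' {p}) := by
    ext q
    simp [HasArrowIn, and_assoc]
  rw [this]
  exact ((hL.inter_right (isClosed_singleton.preimage Gd.continuous_r)).image
    Gd.continuous_s).isClosed

lemma isClosed_setOf_hasArrowIn_left [T2Space G] {L : Set G} (hL : IsCompact L) (p : G) :
    IsClosed {q | Gd.HasArrowIn L q p} := by
  have : {q | Gd.HasArrowIn L q p} = Gd.r '' (L ∩ Gd.s ⁻¹' {p}) := by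
    ext q
    exact ⟨fun ⟨γ, hγ, hr, hs⟩ => ⟨γ, ⟨hγ, hs⟩, hr⟩,
      fun ⟨γ, ⟨hγ, hs⟩, hr⟩ => ⟨γ, hγ, hr, hs⟩⟩
  rw [this]
  exact ((hL.inter_right (isClosed_singleton.preimage Gd.continuous_s)).image
    Gd.continuous_r).isClosed

lemma hasArrowIn_setMul_inv {S : Set G} {β β' α : G} (h : Gd.s β = Gd.r α)
    (h' : Gd.s β' = Gd.r α) (hS : Gd.mul β α ∈ S) (hS' : Gd.mul β' α ∈ S) :
    Gd.HasArrowIn (Gd.setMul S (Gd.inv '' S)) (Gd.r β) (Gd.r β') := by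
  have hc : Gd.s (Gd.mul β α) = Gd.r (Gd.inv (Gd.mul β' α)) := by
    rw [Gd.r_inv, Gd.s_mul _ _ h, Gd.s_mul _ _ h']
  refine ⟨Gd.mul (Gd.mul β α) (Gd.inv (Gd.mul β' α)),
    ⟨_, hS, _, ⟨_, hS', rfl⟩, hc, rfl⟩, ?_, ?_⟩
  · rw [Gd.r_mul _ _ hc, Gd.r_mul _ _ h]
  · rw [Gd.s_mul _ _ hc, Gd.s_inv, Gd.r_mul _ _ h']

lemma exists_finset_subset_orbit_pairwise [T2Space G] {z y : G} {W L : Set G}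
    (hL : IsCompact L) (hW : IsOpen W) (hyW : y ∈ W) (hy : y ∈ closure (Gd.orbit z))
    (hyO : y ∉ Gd.orbit z) (k : ℕ) :
    ∃ P : Finset G, P.card = k ∧ ↑P ⊆ Gd.orbit z ∩ W ∧
      (P : Set G).Pairwise fun p q => ¬ Gd.HasArrowIn L p q := by
  induction k with
  | zero => exact ⟨∅, rfl, by simp, by simp⟩
  | succ k ih =>
    obtain ⟨P, hcard, hPO, hPpw⟩ := ih
    set U := W ∩ (↑P)ᶜ ∩
      ⋂ p ∈ P, ({q | Gd.HasArrowIn L q p} ∪ {q | Gd.HasArrowIn L p q})ᶜ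
    have hU : IsOpen U := (hW.inter P.finite_toSet.isClosed.isOpen_compl).inter <|
      isOpen_biInter_finset fun p _ => ((isClosed_setOf_hasArrowIn_left hL p).union
        (isClosed_setOf_hasArrowIn_right hL p)).isOpen_compl
    have hyU : y ∈ U := by
      refine ⟨⟨hyW, fun hyP => hyO (hPO hyP).1⟩, Set.mem_iInter₂.2 fun p hp => ?_⟩
      rintro (⟨γ, -, hr, hs⟩ | ⟨γ, -, hr, hs⟩)
      · exact hyO (hr ▸ r_mem_orbit_of_s_mem_orbit (hs ▸ (hPO hp).1))
      · exact hyO (hs ▸ s_mem_orbit_of_r_mem_orbit (hr ▸ (hPO hp).1))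
    obtain ⟨q, ⟨⟨hqW, hqP⟩, hqL⟩, hqO⟩ := mem_closure_iff.1 hy U hU hyU
    refine ⟨insert q P, by rw [Finset.card_insert_of_notMem hqP, hcard], ?_, ?_⟩
    · rw [Finset.coe_insert]
      exact Set.insert_subset ⟨hqO, hqW⟩ hPO
    · rw [Finset.coe_insert, Set.pairwise_insert]
      exact ⟨hPpw, fun p hp _ => not_or.1 (Set.mem_iInter₂.1 hqL p hp)⟩

end TopGroupoid

theorem MeasureTheory.card_mul_le_measure_of_pairwiseDisjoint {ι α : Type*}
    [MeasurableSpace α] {μ : Measure α} {P : Finset ι} {E : ι → Set α} {A : Set α} {c : ℝ≥0∞}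
    (hd : (P : Set ι).PairwiseDisjoint E) (hm : ∀ i ∈ P, MeasurableSet (E i))
    (hA : ∀ i ∈ P, E i ⊆ A) (hc : ∀ i ∈ P, c ≤ μ (E i)) : P.card * c ≤ μ A :=
  calc (P.card : ℝ≥0∞) * c = ∑ _i ∈ P, c := by rw [Finset.sum_const, nsmul_eq_mul]
    _ ≤ ∑ i ∈ P, μ (E i) := Finset.sum_le_sum hc
    _ = μ (⋃ i ∈ P, E i) := (measure_biUnion_finset hd hm).symm
    _ ≤ μ A := measure_mono (Set.iUnion₂_subset hA)

namespace HaarSystem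

open TopGroupoid

variable {G : Type*} [TopologicalSpace G] [MeasurableSpace G] {Gd : TopGroupoid G}
  (HS : HaarSystem Gd)

lemma ae_r_eq {x : G} (hx : x ∈ Gd.units) : ∀ᵐ α ∂HS.lam x, Gd.r α = x := by
  rw [ae_iff]
  exact HS.supp_subset x hx

lemma integral_pos_of_apply_ne_zero [BorelSpace G] {x : G} (hx : x ∈ Gd.units) {h : G → ℝ}
    (hc : Continuous h) (hcs : HasCompactSupport h) (h0 : 0 ≤ h) (hx0 : h x ≠ 0) :
    0 < ∫ γ, h γ ∂HS.lam x := by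
  have := HS.regular x
  rw [integral_pos_iff_support_of_nonneg h0 (hc.integrable_of_hasCompactSupport hcs)]
  exact HS.supp_full x hx _ hc.isOpen_support ⟨x, hx0, r_eq_self_of_mem_units hx⟩

lemma exists_bump_integral_pos [T2Space G] [LocallyCompactSpace G] [BorelSpace G] {x₀ : G}
    (hx₀ : x₀ ∈ Gd.units) {U : Set G} (hU : IsOpen U) (hx₀U : x₀ ∈ U) :
    ∃ f : C(G, ℝ), HasCompactSupport f ∧ (∀ γ, f γ ≤ 1) ∧ Gd.s '' tsupport f ⊆ U ∧
      0 < ∫ γ, f γ ∂HS.lam x₀ := by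
  obtain ⟨f, hfx₀, hfcs, hfU, hf01⟩ := exists_continuousMap_one_of_isCompact_subset_isOpen
    isCompact_singleton (hU.preimage Gd.continuous_s)
    (Set.singleton_subset_iff.2 <| show Gd.s x₀ ∈ U by rwa [s_eq_self_of_mem_units hx₀])
  refine ⟨f, hfcs, fun γ => (hf01 γ).2, Set.image_subset_iff.2 hfU, ?_⟩
  exact HS.integral_pos_of_apply_ne_zero hx₀ f.continuous hfcs (fun γ => (hf01 γ).1)
    (by rw [hfx₀ rfl]; exact one_ne_zero)

lemma ofReal_integral_le_lam_setOf_mul_mem {h : G → ℝ} (hc : Continuous h)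
    (hcs : HasCompactSupport h) (h1 : ∀ γ, h γ ≤ 1) (β : G) :
    ENNReal.ofReal (∫ γ, h γ ∂HS.lam (Gd.r β)) ≤
      HS.lam (Gd.s β) {α | Gd.r α = Gd.s β ∧ Gd.mul β α ∈ tsupport h} := by
  rw [← HS.left_invariant β h hc hcs]
  -- `Gd.mul β α` is a junk value unless `Gd.r α = Gd.s β`, and `λ^{s β}` lives on that fibre.
  set R := Gd.r ⁻¹' {Gd.s β}
  have hae : (fun α => h (Gd.mul β α)) =ᵐ[HS.lam (Gd.s β)]
      R.indicator fun α => h (Gd.mul β α) := by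
    filter_upwards [HS.ae_r_eq (s_mem_units β)] with α (hα : α ∈ R)
    exact (Set.indicator_of_mem hα fun α => h (Gd.mul β α)).symm
  rw [integral_congr_ae hae]
  refine integral_le_measure (fun α _ => ?_) (fun α hα => ?_)
  · exact Set.indicator_apply_le' (fun _ => h1 _) fun _ => zero_le_one
  · exact Set.indicator_apply_le'
      (fun hr => (image_eq_zero_of_notMem_tsupport fun h' => hα ⟨hr, h'⟩).le) fun _ => le_rfl

lemma card_mul_le_lam [T2Space G] [BorelSpace G] {h : G → ℝ} (hc : Continuous h)
    (hcs : HasCompactSupport h) (h1 : ∀ γ, h γ ≤ 1) {z x : G} {c : ℝ} {P : Finset G}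
    (hx : x ∈ Gd.orbit z) (hPO : ↑P ⊆ Gd.orbit z)
    (hPc : ∀ p ∈ P, c ≤ ∫ γ, h γ ∂HS.lam p)
    (hPpw : (P : Set G).Pairwise fun p q =>
      ¬ Gd.HasArrowIn (Gd.setMul (tsupport h) (Gd.inv '' tsupport h)) p q) :
    P.card * ENNReal.ofReal c ≤ HS.lam x (Gd.s ⁻¹' (Gd.s '' tsupport h)) := by
  choose! β hβr hβs using fun p (hp : p ∈ P) => exists_arrow_of_mem_orbit (hPO hp) hx
  set E : G → Set G := fun p => {α | Gd.r α = Gd.s (β p) ∧ Gd.mul (β p) α ∈ tsupport h}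
  refine card_mul_le_measure_of_pairwiseDisjoint (E := E) ?_ ?_ ?_ ?_
  · intro p hp q hq hpq
    refine Set.disjoint_left.2 fun α hαp hαq => hPpw hp hq hpq ?_
    have := hasArrowIn_setMul_inv hαp.1.symm hαq.1.symm hαp.2 hαq.2
    rwa [hβr p hp, hβr q hq] at this
  · exact fun p _ => (isClosed_setOf_mul_mem _ (isClosed_tsupport h)).measurableSet
  · rintro p - α ⟨hr, hα⟩
    exact ⟨_, hα, Gd.s_mul _ _ hr.symm⟩
  · intro p hp
    calc ENNReal.ofReal c ≤ ENNReal.ofReal (∫ γ, h γ ∂HS.lam (Gd.r (β p))) :=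
          ENNReal.ofReal_le_ofReal (by rw [hβr p hp]; exact hPc p hp)
      _ ≤ HS.lam (Gd.s (β p)) (E p) :=
          HS.ofReal_integral_le_lam_setOf_mul_mem hc hcs h1 (β p)
      _ = HS.lam x (E p) := by rw [hβs p hp]

theorem notMem_closure_closure_diff_orbit [T2Space G] [LocallyCompactSpace G] [BorelSpace G]
    (hint : HS.Integrable) {z x₀ : G} (hx₀ : x₀ ∈ Gd.orbit z) :
    x₀ ∉ closure (closure (Gd.orbit z) \ Gd.orbit z) := by
  intro hx₀D
  have hx₀u := orbit_subset_units z hx₀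
  obtain ⟨K, hK, hKx₀⟩ := exists_compact_mem_nhds x₀
  set N := K ∩ Gd.units
  have hB := hint N Set.inter_subset_right (hK.inter_right isClosed_units)
  have hx₀K : x₀ ∈ interior K := mem_interior_iff_mem_nhds.2 hKx₀
  obtain ⟨f, hfcs, hf1, hfK, hI⟩ := HS.exists_bump_integral_pos hx₀u isOpen_interior hx₀K
  have hfN : Gd.s '' tsupport f ⊆ N := by
    rintro _ ⟨γ, hγ, rfl⟩
    exact ⟨interior_subset (hfK ⟨γ, hγ, rfl⟩), s_mem_units γ⟩
  set c := (∫ γ, f γ ∂HS.lam x₀) / 2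
  set V := (fun x => ∫ γ, f γ ∂HS.lam x) ⁻¹' Set.Ioi c ∩ interior K
  have hV : IsOpen V :=
    (isOpen_Ioi.preimage (HS.continuous_int f f.continuous hfcs)).inter isOpen_interior
  obtain ⟨y, hyV, hy, hyO⟩ :=
    mem_closure_iff.1 hx₀D V hV ⟨show c < _ from half_lt_self hI, hx₀K⟩
  obtain ⟨n, hn⟩ := ENNReal.exists_nat_mul_gt (ENNReal.ofReal_pos.2 (half_pos hI)).ne' hB.ne
  obtain ⟨P, hcard, hPV, hPpw⟩ := exists_finset_subset_orbit_pairwise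
    (isCompact_setMul hfcs (hfcs.image Gd.continuous_inv)) hV hyV hy hyO n
  obtain ⟨x, hxP⟩ : P.Nonempty := by
    rw [← Finset.card_pos, hcard, Nat.pos_iff_ne_zero]
    rintro rfl
    simp at hn
  have hxN : x ∈ N := ⟨interior_subset (hPV hxP).2.2, orbit_subset_units z (hPV hxP).1⟩
  refine (hn.trans_le ?_).false
  calc (n : ℝ≥0∞) * ENNReal.ofReal c = P.card * ENNReal.ofReal c := by rw [hcard]
    _ ≤ HS.lam x (Gd.s ⁻¹' (Gd.s '' tsupport f)) :=
      HS.card_mul_le_lam f.continuous hfcs hf1 (hPV hxP).1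
        (fun p hp => (hPV hp).1) (fun p hp => (hPV hp).2.1.le) hPpw
    _ ≤ HS.lam x (Gd.s ⁻¹' N) := measure_mono (Set.preimage_mono hfN)
    _ ≤ ⨆ x ∈ N, HS.lam x (Gd.s ⁻¹' N) :=
      le_iSup₂ (f := fun x _ => HS.lam x (Gd.s ⁻¹' N)) x hxN

end HaarSystem

theorem stmt11_general {G : Type*} [TopologicalSpace G] [T2Space G] [LocallyCompactSpace G]
    [MeasurableSpace G] [BorelSpace G]
    (Gd : TopGroupoid G) (HS : HaarSystem Gd)
    (hint : HS.Integrable) :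
    ∀ z ∈ Gd.units, IsLocallyClosed (Subtype.val ⁻¹' Gd.orbit z : Set Gd.units) := by
  intro z _
  have hO : IsLocallyClosed (Gd.orbit z) := by
    rw [isLocallyClosed_iff_isOpen_coborder, coborder, isOpen_compl_iff,
      ← closure_subset_iff_isClosed]
    intro x hx
    exact ⟨closure_minimal Set.sdiff_subset isClosed_closure hx,
      fun hxO => HS.notMem_closure_closure_diff_orbit hint hxO hx⟩
  exact hO.preimage continuous_subtype_val

/-- if `G` is integrable then all orbits are locally closed (in `G⁰`). -/
theorem stmt11 {G : Type*} [TopologicalSpace G] [T2Space G] [LocallyCompactSpace G]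
    [SecondCountableTopology G] [MeasurableSpace G] [BorelSpace G]
    (Gd : TopGroupoid G) (HS : HaarSystem Gd) (hpr : Gd.Principal)
    (hint : HS.Integrable) :
    ∀ z ∈ Gd.units, IsLocallyClosed (Subtype.val ⁻¹' Gd.orbit z : Set Gd.units) :=
  stmt11_general Gd HS hint
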